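/- arXiv:1604.03117 — 2 statements merged into one kernel-verified Lean document; each statement's English description precedes it below -/
import Mathlib

section
/- Fix A, a, b ∈ ℝ and define, on the open set {(q',p',τ',π') ∈ ℝ⁴ : q' > b and q' ≠ 0}, the functions H'(q',p',τ',π') = π' − A e^{(2/3)τ'} (q'−b)^{−2/3} and φ'(q',p',τ',π') = p' − a q'^{−2} + A e^{(2/3)τ'} (q'−b)^{−5/3}. Then the canonical Poisson bracket {H', φ'} vanishes identically on this set. -/
/-!
Both constraints are linear in the momenta: `H' = π' − U(q', τ')` and `φ' = p' + V(q', τ')`.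
For such a pair the bracket collapses to `−(∂U/∂q' + ∂V/∂τ')`, and for the van der Waals
potentials both partial derivatives equal `∓(2/3) A e^{(2/3)τ'} (q' − b)^{−5/3}`; the term
`−a q'^{−2}` of `V` does not depend on `τ'` and drops out.
-/

/-- Canonical Poisson bracket on ℝ⁴ with coordinates (q,p,τ,π):
{F,G} = ∂F/∂q ∂G/∂p − ∂F/∂p ∂G/∂q + ∂F/∂τ ∂G/∂π − ∂F/∂π ∂G/∂τ. -/
noncomputable def pb4 (F G : ℝ → ℝ → ℝ → ℝ → ℝ) (q p τ π : ℝ) : ℝ :=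
  deriv (fun x => F x p τ π) q * deriv (fun x => G q x τ π) p
  - deriv (fun x => F q x τ π) p * deriv (fun x => G x p τ π) q
  + deriv (fun x => F q p x π) τ * deriv (fun x => G q p τ x) π
  - deriv (fun x => F q p τ x) π * deriv (fun x => G q p x π) τ

theorem pb4_sub_add (U V : ℝ → ℝ → ℝ) (q p τ π : ℝ) :
    pb4 (fun q _ τ π => π - U q τ) (fun q p τ _ => p + V q τ) q p τ π =
      -(deriv (fun x => U x τ) q + deriv (fun t => V q t) τ) := by
  simp only [pb4, deriv_const_sub, deriv_const_add, deriv_sub_const, deriv_add_const,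
    deriv_id'', deriv_const]
  ring

theorem deriv_const_mul_sub_rpow (c b r : ℝ) {q : ℝ} (hq : q ≠ b) :
    deriv (fun x => c * (x - b) ^ r) q = c * (r * (q - b) ^ (r - 1)) := by
  rw [deriv_const_mul_field,
    deriv_rpow_const (f := fun x => x - b) (by fun_prop) (Or.inl (sub_ne_zero.2 hq)),
    deriv_sub_const, deriv_id'', one_mul]

theorem deriv_const_add_const_mul_exp_mul (d c k e t : ℝ) :
    deriv (fun t => d + c * Real.exp (k * t) * e) t = c * (Real.exp (k * t) * k) * e := by
  rw [deriv_const_add, deriv_mul_const_field, deriv_const_mul_field, deriv_exp (by fun_prop),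
    deriv_const_mul_field, deriv_id'', mul_one]

/-- The van der Waals constraints H' = π' − A e^{(2/3)τ'}(q'−b)^{−2/3} and
φ' = p' − a q'^{−2} + A e^{(2/3)τ'}(q'−b)^{−5/3} are first-class: {H',φ'} = 0. -/
theorem stmt_11 (A a b : ℝ) (H' φ' : ℝ → ℝ → ℝ → ℝ → ℝ)
    (hH' : ∀ q' p' τ' π',
      H' q' p' τ' π' = π' - A * Real.exp ((2/3) * τ') * (q' - b) ^ (-(2:ℝ)/3))
    (hφ' : ∀ q' p' τ' π',
      φ' q' p' τ' π' = p' - a / q' ^ 2 + A * Real.exp ((2/3) * τ') * (q' - b) ^ (-(5:ℝ)/3)) :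
    ∀ q' p' τ' π' : ℝ, b < q' → q' ≠ 0 → pb4 H' φ' q' p' τ' π' = 0 := by
  intro q p τ π hb _
  have hH : H' = fun q _ τ π => π - A * Real.exp ((2/3) * τ) * (q - b) ^ (-(2:ℝ)/3) := by
    funext q p τ π
    exact hH' q p τ π
  have hφ : φ' = fun q p τ _ =>
      p + (-(a / q ^ 2) + A * Real.exp ((2/3) * τ) * (q - b) ^ (-(5:ℝ)/3)) := by
    funext q p τ π
    rw [hφ']
    ring
  rw [hH, hφ, pb4_sub_add, deriv_const_mul_sub_rpow _ _ _ hb.ne',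
    deriv_const_add_const_mul_exp_mul, show -(2:ℝ)/3 - 1 = -5/3 by norm_num]
  ring
end

section
/- Fix A > 0, a, b, c ∈ ℝ, and define, for T > 0 and v > max(b, c), the Helmholtz free energy f(T, v) = a/(T(v − c)) + (3/2) T [1 − ln(T/A) − (2/3) ln(v − b)]. Then for all such (T, v): (i) f(T,v) = u(T,v) − T·s(T,v), where u(T, v) = (3/2)T + 2a/(T(v − c)) and s(T, v) = a/(T²(v − c)) + ln(v − b) + (3/2) ln(T/A); (ii) ∂f/∂v(T,v) = −P(T,v), where P(T, v) = T/(v − b) + a/(T(v − c)²); and (iii) ∂f/∂T(T,v) = −s(T,v). -/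
open Real

noncomputable section

namespace ClausiusGas

def freeEnergy (A a b c T v : ℝ) : ℝ :=
  a / (T * (v - c)) + (3/2) * T * (1 - log (T / A) - (2/3) * log (v - b))

def internalEnergy (a c T v : ℝ) : ℝ := (3/2) * T + 2 * a / (T * (v - c))

def entropy (A a b c T v : ℝ) : ℝ :=
  a / (T ^ 2 * (v - c)) + log (v - b) + (3/2) * log (T / A)

def pressure (a b c T v : ℝ) : ℝ := T / (v - b) + a / (T * (v - c) ^ 2)

-- No side conditions: at `T = 0` or `v = c` every quotient involved is `0` by convention.
theorem freeEnergy_eq_internalEnergy_sub_mul_entropy (A a b c T v : ℝ) :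
    freeEnergy A a b c T v = internalEnergy a c T v - T * entropy A a b c T v := by
  unfold freeEnergy internalEnergy entropy
  rcases eq_or_ne T 0 with rfl | hT
  · simp
  rcases eq_or_ne (v - c) 0 with hvc | hvc
  · simp only [hvc, mul_zero, div_zero, zero_add, add_zero]
    ring
  field_simp
  ring

theorem hasDerivAt_freeEnergy_volume {A a b c T v : ℝ} (hT : T ≠ 0) (hvb : v - b ≠ 0)
    (hvc : v - c ≠ 0) :
    HasDerivAt (freeEnergy A a b c T) (-pressure a b c T v) v := by
  have hfrac := ((hasDerivAt_const v a).div (((hasDerivAt_id' v).sub_const c).const_mul T)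
    (mul_ne_zero hT hvc))
  have hlog := ((((hasDerivAt_id' v).sub_const b).log hvb).const_mul (2/3)).const_sub
    (1 - log (T / A))
  refine (hfrac.add (hlog.const_mul ((3/2) * T))).congr_deriv ?_
  unfold pressure
  field_simp
  ring

theorem hasDerivAt_freeEnergy_temperature {A a b c T v : ℝ} (hA : A ≠ 0) (hT : T ≠ 0)
    (hvc : v - c ≠ 0) :
    HasDerivAt (freeEnergy A a b c · v) (-entropy A a b c T v) T := by
  have hfrac := (hasDerivAt_const T a).div ((hasDerivAt_id' T).mul_const (v - c))
    (mul_ne_zero hT hvc)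
  have hlog := ((((hasDerivAt_id' T).div_const A).log (div_ne_zero hT hA)).const_sub 1).sub_const
    ((2/3) * log (v - b))
  refine (hfrac.add (((hasDerivAt_id' T).const_mul (3/2)).mul hlog)).congr_deriv ?_
  unfold entropy
  field_simp
  ring

end ClausiusGas

end

/-- The Helmholtz free energy of the Clausius gas,
f = a/(T(v−c)) + (3/2)T[1 − ln(T/A) − (2/3)ln(v−b)], satisfies f = u − Ts,
∂f/∂v = −P and ∂f/∂T = −s. -/
theorem stmt_17 (A a b c : ℝ) (hA : 0 < A)
    (f u s P : ℝ → ℝ → ℝ)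
    (hf : ∀ T v, f T v = a / (T * (v - c))
      + (3/2) * T * (1 - Real.log (T / A) - (2/3) * Real.log (v - b)))
    (hu : ∀ T v, u T v = (3/2) * T + 2 * a / (T * (v - c)))
    (hs : ∀ T v, s T v = a / (T ^ 2 * (v - c)) + Real.log (v - b) + (3/2) * Real.log (T / A))
    (hP : ∀ T v, P T v = T / (v - b) + a / (T * (v - c) ^ 2)) :
    ∀ T v : ℝ, 0 < T → max b c < v →
      f T v = u T v - T * s T v ∧
      deriv (fun v' => f T v') v = -(P T v) ∧
      deriv (fun T' => f T' v) T = -(s T v) := by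
  obtain rfl : f = ClausiusGas.freeEnergy A a b c := funext₂ hf
  obtain rfl : u = ClausiusGas.internalEnergy a c := funext₂ hu
  obtain rfl : s = ClausiusGas.entropy A a b c := funext₂ hs
  obtain rfl : P = ClausiusGas.pressure a b c := funext₂ hP
  intro T v hT hv
  have hvb : v - b ≠ 0 := (sub_pos.2 (max_lt_iff.1 hv).1).ne'
  have hvc : v - c ≠ 0 := (sub_pos.2 (max_lt_iff.1 hv).2).ne'
  exact ⟨ClausiusGas.freeEnergy_eq_internalEnergy_sub_mul_entropy A a b c T v,
    (ClausiusGas.hasDerivAt_freeEnergy_volume hT.ne' hvb hvc).deriv,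
    (ClausiusGas.hasDerivAt_freeEnergy_temperature hA.ne' hT.ne' hvc).deriv⟩
end
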